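/- arXiv:2405.01018 — 4 statements merged into one kernel-verified Lean document; each statement's English description precedes it below -/
import Mathlib

section
/- There exists N ∈ ℕ such that for all n ≥ N and all x ∈ ℝ, the product φ_1(x)φ_2(x)···φ_n(x) ≤ φ_1(x)·(φ_n(x))^2, where φ(x) = e^x and φ_n denotes the n-th iterate of φ. -/
private lemma two_mul_le_exp (t : ℝ) : 2 * t ≤ Real.exp t := by
  have h := Real.add_one_le_exp (t / 2)
  have h2 : Real.exp t = Real.exp (t / 2) * Real.exp (t / 2) := by
    rw [← Real.exp_add]; ring_nf
  rcases le_or_gt t 0 with ht | ht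
  · nlinarith [Real.exp_pos t]
  · nlinarith [Real.exp_pos (t / 2), sq_nonneg (t / 2 - 1)]

private lemma key_sum (x : ℝ) : ∀ m : ℕ,
    (∑ j ∈ Finset.Icc 1 m, Real.exp^[j] x) ≤ Real.exp^[m + 1] x := by
  intro m
  induction m with
  | zero => simp [Real.exp_pos x |>.le]
  | succ m ih =>
    rw [Finset.sum_Icc_succ_top (by omega : 1 ≤ m + 1)]
    have h1 : (∑ j ∈ Finset.Icc 1 m, Real.exp^[j] x) + Real.exp^[m + 1] x
        ≤ 2 * Real.exp^[m + 1] x := by linarith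
    calc _ ≤ 2 * Real.exp^[m + 1] x := h1
      _ ≤ Real.exp (Real.exp^[m + 1] x) := two_mul_le_exp _
      _ = Real.exp^[m + 2] x := (Function.iterate_succ_apply' Real.exp (m+1) x).symm

private lemma prod_eq (x : ℝ) : ∀ m : ℕ,
    (∏ j ∈ Finset.Icc 1 (m + 1), Real.exp^[j] x)
      = Real.exp (x + ∑ j ∈ Finset.Icc 1 m, Real.exp^[j] x) := by
  intro m
  induction m with
  | zero => simp
  | succ m ih =>
    rw [Finset.prod_Icc_succ_top (by omega : 1 ≤ m + 1 + 1), ih,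
      Finset.sum_Icc_succ_top (by omega : 1 ≤ m + 1),
      Function.iterate_succ_apply' Real.exp (m + 1) x, ← Real.exp_add]
    ring_nf

/-- For φ(x) = e^x on ℝ, there is N ∈ ℕ such that for all n ≥ N and all x ∈ ℝ:
φ_1(x)·φ_2(x)···φ_n(x) ≤ φ_1(x)·(φ_n(x))². -/
theorem exp_weight_product_le :
    ∃ N : ℕ, ∀ n : ℕ, N ≤ n → ∀ x : ℝ,
      (∏ j ∈ Finset.Icc 1 n, Real.exp^[j] x) ≤ Real.exp x * (Real.exp^[n] x) ^ 2 := by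
  refine ⟨2, fun n hn x => ?_⟩
  obtain ⟨m, rfl⟩ : ∃ m, n = m + 2 := ⟨n - 2, by omega⟩
  have hsum : (∑ j ∈ Finset.Icc 1 (m + 1), Real.exp^[j] x)
      ≤ 2 * Real.exp^[m + 1] x := by
    rw [Finset.sum_Icc_succ_top (by omega : 1 ≤ m + 1)]
    have := key_sum x m
    linarith
  calc (∏ j ∈ Finset.Icc 1 (m + 2), Real.exp^[j] x)
      = Real.exp (x + ∑ j ∈ Finset.Icc 1 (m + 1), Real.exp^[j] x) := prod_eq x (m + 1)
    _ ≤ Real.exp (x + 2 * Real.exp^[m + 1] x) := by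
        apply Real.exp_le_exp.mpr; linarith
    _ = Real.exp x * (Real.exp^[m + 2] x) ^ 2 := by
        rw [Function.iterate_succ_apply' Real.exp (m + 1) x, Real.exp_add,
          ← Real.exp_nat_mul]
        norm_num [sq, ← Real.exp_add, two_mul]
end

section
/- Let φ(x) = ax + b with 0 < a < 1, let c ∈ ℂ \ {0}, and let p ≥ 1 satisfy a^p < |c|. Then for every q ≥ p, sup_{n∈ℕ} sup_{x∈ℝ} (1+|x|)^p · |c|^n / (1 + |a^n x + b(1−a^n)/(1−a)|)^q = ∞. -/
/-- For φ(x) = ax + b with 0 < a < 1, c ∈ ℂ \ {0}, and p ≥ 1 with a^p < |c|: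
for every q ≥ p, sup_{n∈ℕ} sup_{x∈ℝ} (1+|x|)^p·|c|ⁿ/(1+|aⁿx+b(1−aⁿ)/(1−a)|)^q = ∞. -/
theorem contraction_weighted_sup_infinite (a b : ℝ) (ha0 : 0 < a) (ha1 : a < 1)
    (c : ℂ) (hc : c ≠ 0) (p : ℝ) (hp : 1 ≤ p) (hap : a ^ p < ‖c‖) :
    ∀ q : ℝ, p ≤ q → ∀ C : ℝ, ∃ n : ℕ, ∃ x : ℝ,
      C < (1 + |x|) ^ p * ‖c‖ ^ n /
        (1 + |a ^ n * x + b * (1 - a ^ n) / (1 - a)|) ^ q := by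
  intro q hq C
  have hA : 0 < ‖c‖ := norm_pos_iff.mpr hc
  set A := ‖c‖ with hAdef
  have hap0 : 0 < a ^ p := Real.rpow_pos_of_pos ha0 p
  have h1a : 0 < 1 - a := by linarith
  set t : ℝ := b / (1 - a) + 1 with ht
  set D0 : ℝ := (1 + |t|) ^ q with hD0
  have hD0pos : 0 < D0 := Real.rpow_pos_of_pos (by positivity) q
  have h2p : (0:ℝ) < 2 ^ p := Real.rpow_pos_of_pos (by norm_num) p
  set r : ℝ := A / a ^ p with hr
  have hr1 : 1 < r := (one_lt_div hap0).mpr hap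
  have hrt : Filter.Tendsto (fun n : ℕ => r ^ n) Filter.atTop Filter.atTop :=
    tendsto_pow_atTop_atTop_of_one_lt hr1
  have hat : Filter.Tendsto (fun n : ℕ => a ^ n) Filter.atTop (nhds 0) :=
    tendsto_pow_atTop_nhds_zero_of_lt_one ha0.le ha1
  have hev1 : ∀ᶠ n : ℕ in Filter.atTop, (max C 0 + 1) * (2 ^ p * D0) < r ^ n :=
    hrt.eventually_gt_atTop _
  have hev2 : ∀ᶠ n : ℕ in Filter.atTop, a ^ n < (1 - a) / (2 * (|b| + 1)) :=
    hat.eventually (eventually_lt_nhds (show (0:ℝ) < (1 - a) / (2 * (|b| + 1)) by positivity))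
  obtain ⟨n, h1, h2⟩ := (hev1.and hev2).exists
  have han : 0 < a ^ n := pow_pos ha0 n
  refine ⟨n, (t - b * (1 - a ^ n) / (1 - a)) / a ^ n, ?_⟩
  set x := (t - b * (1 - a ^ n) / (1 - a)) / a ^ n with hx
  have hyx : a ^ n * x + b * (1 - a ^ n) / (1 - a) = t := by
    rw [hx]; field_simp; ring
  rw [hyx]
  -- lower bound on |x|
  have hnum : t - b * (1 - a ^ n) / (1 - a) = 1 + b * a ^ n / (1 - a) := by
    rw [ht]; field_simp; ring
  have hb2 : |b * a ^ n / (1 - a)| ≤ 1 / 2 := by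
    rw [abs_div, abs_mul, abs_of_pos h1a, abs_of_pos han, div_le_iff₀ h1a]
    have h2' : a ^ n * (2 * (|b| + 1)) < 1 - a :=
      (lt_div_iff₀ (by positivity)).mp h2
    nlinarith [abs_nonneg b, han.le]
  have h1half : (1:ℝ)/2 ≤ |t - b * (1 - a ^ n) / (1 - a)| := by
    rw [hnum]
    have habs := abs_add_le (1 + b * a ^ n / (1 - a)) (-(b * a ^ n / (1 - a)))
    simp only [add_neg_cancel_right, abs_neg, abs_one] at habs
    linarith
  have hxl : (2 * a ^ n)⁻¹ ≤ |x| := by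
    have hxe : |x| = |t - b * (1 - a ^ n) / (1 - a)| / a ^ n := by
      rw [hx, abs_div, abs_of_pos han]
    have heq : (2 * a ^ n)⁻¹ * a ^ n = 2⁻¹ := by field_simp
    rw [hxe, le_div_iff₀ han, heq]
    linarith
  -- main computation
  have hpow : ((a:ℝ) ^ n) ^ p = (a ^ p) ^ n := by
    rw [← Real.rpow_natCast a n, ← Real.rpow_natCast (a ^ p) n,
       ← Real.rpow_mul ha0.le, ← Real.rpow_mul ha0.le, mul_comm]
  have hstep2 : ((2 * a ^ n)⁻¹ : ℝ) ^ p = (2 ^ p)⁻¹ * ((a ^ p) ^ n)⁻¹ := by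
    rw [Real.inv_rpow (by positivity), Real.mul_rpow (by norm_num) (by positivity),
        mul_inv, hpow]
  have hstep1 : ((2 * a ^ n)⁻¹ : ℝ) ^ p ≤ (1 + |x|) ^ p := by
    apply Real.rpow_le_rpow (by positivity) ?_ (by linarith)
    linarith [abs_nonneg x, hxl]
  have hrn : (2 ^ p)⁻¹ * ((a ^ p) ^ n)⁻¹ * A ^ n = (2 ^ p)⁻¹ * r ^ n := by
    rw [hr, div_pow]
    have : (0:ℝ) < (a ^ p) ^ n := pow_pos hap0 n
    field_simp
  have hA0 : (0:ℝ) < A ^ n := pow_pos hA n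
  have key : (2 ^ p)⁻¹ * r ^ n / D0 ≤ (1 + |x|) ^ p * A ^ n / D0 := by
    have hnumle : (2 ^ p)⁻¹ * r ^ n ≤ (1 + |x|) ^ p * A ^ n := by
      calc (2 ^ p)⁻¹ * r ^ n = (2 ^ p)⁻¹ * ((a ^ p) ^ n)⁻¹ * A ^ n := hrn.symm
        _ = ((2 * a ^ n)⁻¹ : ℝ) ^ p * A ^ n := by rw [hstep2]
        _ ≤ (1 + |x|) ^ p * A ^ n := mul_le_mul_of_nonneg_right hstep1 hA0.le
    gcongr
  have final : C < (2 ^ p)⁻¹ * r ^ n / D0 := by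
    rw [lt_div_iff₀ hD0pos]
    have hmul : (2 ^ p)⁻¹ * ((max C 0 + 1) * (2 ^ p * D0)) < (2 ^ p)⁻¹ * r ^ n :=
      mul_lt_mul_of_pos_left h1 (inv_pos.mpr h2p)
    have hsimp : (2 ^ p)⁻¹ * ((max C 0 + 1) * (2 ^ p * D0)) = (max C 0 + 1) * D0 := by
      field_simp
    nlinarith [le_max_left C 0, hD0pos]
  linarith
end

section
/- Let E be a Montel locally convex space and T ∈ L(E) a continuous linear operator. If λT is power bounded for some λ > 1, then the sequence of iterates (T^n)_{n∈ℕ} converges to 0 in L_b(E) (the space of operators with the topology of uniform convergence on bounded sets). -/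
open Pointwise

/-- Let E be a Montel locally convex space (barrelled, and every von Neumann bounded set
is relatively compact) and T a continuous linear operator on E. If λT is power bounded
(its iterates are equicontinuous) for some λ > 1, then (Tⁿ)ₙ converges to 0 in L_b(E),
i.e. in the topology of uniform convergence on bounded sets. -/
theorem montel_power_bounded_scaled_implies_iterates_tendsto_zero
    {E : Type*} [AddCommGroup E] [Module ℝ E] [UniformSpace E] [IsUniformAddGroup E]
    [ContinuousSMul ℝ E] [LocallyConvexSpace ℝ E] [T2Space E]
    [BarrelledSpace ℝ E]
    (hMontel : ∀ s : Set E, Bornology.IsVonNBounded ℝ s → IsCompact (closure s))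
    (T : E →L[ℝ] E) (l : ℝ) (hl : 1 < l)
    (hpb : Equicontinuous fun n : ℕ => ⇑((l • T) ^ n)) :
    Filter.Tendsto (fun n : ℕ => T ^ n) Filter.atTop (nhds 0) := by
  rw [(ContinuousLinearMap.hasBasis_nhds_zero).tendsto_right_iff]
  rintro ⟨S, V⟩ ⟨hS, hV⟩
  -- balanced V' ⊆ V
  obtain ⟨V', ⟨hV'₁, hV'bal⟩, hV'V⟩ := (nhds_basis_balanced ℝ E).mem_iff.mp hV
  -- equicontinuity at 0
  have hU : {p : E × E | p.2 - p.1 ∈ V'} ∈ uniformity E := by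
    rw [uniformity_eq_comap_nhds_zero]
    exact Filter.preimage_mem_comap hV'₁
  have h0 := (hpb 0) _ hU
  rw [Filter.eventually_iff_exists_mem] at h0
  obtain ⟨W, hW, hWsub⟩ := h0
  -- S is absorbed by W
  obtain ⟨c, hc, hcS⟩ := (hS hW).exists_pos
  -- choose N with (1/l)^n * c ≤ 1 for n ≥ N
  have hlim : Filter.Tendsto (fun n : ℕ => c * l⁻¹ ^ n) Filter.atTop (nhds 0) := by
    rw [show (0:ℝ) = c * 0 by ring]
    exact (tendsto_pow_atTop_nhds_zero_of_lt_one (by positivity)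
      (by rw [inv_lt_one_iff₀]; right; exact hl)).const_mul c
  filter_upwards [hlim.eventually (eventually_le_nhds one_pos)] with n hn
  intro x hx
  have hl0 : (0:ℝ) < l := lt_trans one_pos hl
  -- x ∈ c • W since c absorbs
  have hxW : x ∈ c • W := hcS c (by rw [Real.norm_eq_abs, abs_of_pos hc]) hx
  obtain ⟨w, hw, rfl⟩ := hxW
  have key : ∀ m : ℕ, ((l • T) ^ m) w ∈ V' := by
    intro m
    have := hWsub w hw m
    simpa only [Set.mem_setOf_eq, map_zero, sub_zero] using this
  have hpow : ∀ m : ℕ, ∀ y : E, ((l • T) ^ m) y = l ^ m • ((T ^ m) y) := by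
    intro m
    induction m with
    | zero => intro y; simp
    | succ m ih =>
        intro y
        simp only [pow_succ, ContinuousLinearMap.mul_apply, ContinuousLinearMap.smul_apply,
          map_smul, ih, smul_smul]
  have : (T ^ n) (c • w) = (c * l⁻¹ ^ n) • ((l • T) ^ n) w := by
    rw [hpow n w, map_smul, smul_smul]
    congr 1
    rw [mul_assoc, ← mul_pow, inv_mul_cancel₀ (by positivity), one_pow, mul_one]
  rw [this]
  apply hV'V
  apply hV'bal (c * l⁻¹ ^ n) _ (Set.smul_mem_smul_set (key n))
  rw [Real.norm_eq_abs, abs_of_nonneg (by positivity)]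
  exact hn
end

section
/- Let φ : ℝ → ℝ be smooth such that φ(x₀) = φ(x₁) for some x₀ ≠ x₁, and let ψ be smooth with ψ(x₀) ≠ 0 and ψ(x₁) ≠ 0 such that C_{ψ,φ} acts on 𝒮(ℝ). Then the range of C_{ψ,φ} is contained in the kernel of the functional f ↦ (ψ(x₀)/ψ(x₁)) f(x₁) − f(x₀); in particular C_{ψ,φ} does not have dense range and hence is not weakly supercyclic. -/
/-- A smooth compactly supported function is a Schwartz function. -/
noncomputable def schwartzOfCompactSupport (f : ℝ → ℂ) (hf : ContDiff ℝ ((⊤ : ℕ∞)) f)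
    (h : HasCompactSupport f) : SchwartzMap ℝ ℂ where
  toFun := f
  smooth' := hf
  decay' := by
    intro k n
    have hcont : Continuous fun x : ℝ => ‖x‖ ^ k * ‖_root_.iteratedFDeriv ℝ n f x‖ :=
      ((continuous_norm.pow k).mul
        (hf.continuous_iteratedFDeriv (by exact_mod_cast le_top)).norm)
    have hsupp : HasCompactSupport fun x : ℝ => ‖x‖ ^ k * ‖_root_.iteratedFDeriv ℝ n f x‖ :=
      HasCompactSupport.mul_left (h.iteratedFDeriv n).norm
    obtain ⟨R, hR⟩ := hcont.bounded_above_of_compact_support hsupp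
    refine ⟨R, fun x => ?_⟩
    have := hR x
    rwa [Real.norm_eq_abs, abs_of_nonneg (by positivity)] at this

/-- Let φ : ℝ → ℝ be smooth with φ(x₀) = φ(x₁) for some x₀ ≠ x₁, and ψ smooth with
ψ(x₀) ≠ 0 ≠ ψ(x₁), such that C_{ψ,φ} acts on 𝒮(ℝ). Then the range of C_{ψ,φ} is
contained in the kernel of f ↦ (ψ(x₀)/ψ(x₁))f(x₁) − f(x₀); in particular C_{ψ,φ} does
not have dense range and is not weakly supercyclic. -/
theorem weighted_composition_noninjective_symbol_not_weakly_supercyclic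
    (φ : ℝ → ℝ) (hφ : ContDiff ℝ (⊤ : ℕ∞) φ) (x₀ x₁ : ℝ) (hne : x₀ ≠ x₁)
    (hφeq : φ x₀ = φ x₁)
    (ψ : ℝ → ℂ) (hψ : ContDiff ℝ (⊤ : ℕ∞) ψ) (hψ0 : ψ x₀ ≠ 0) (hψ1 : ψ x₁ ≠ 0)
    (C : SchwartzMap ℝ ℂ →L[ℂ] SchwartzMap ℝ ℂ)
    (hC : ∀ (f : SchwartzMap ℝ ℂ) (x : ℝ), C f x = ψ x * f (φ x)) :
    (∀ f : SchwartzMap ℝ ℂ, (ψ x₀ / ψ x₁) * C f x₁ - C f x₀ = 0) ∧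
    ¬ DenseRange ⇑C ∧
    ¬ ∃ f : SchwartzMap ℝ ℂ,
        Dense (X := WeakSpace ℂ (SchwartzMap ℝ ℂ))
          {g : SchwartzMap ℝ ℂ | ∃ (c : ℂ) (n : ℕ), 1 ≤ n ∧ g = c • ((C ^ n) f)} := by
  -- The functional L f = (ψ x₀ / ψ x₁) * f x₁ - f x₀
  set L : SchwartzMap ℝ ℂ →L[ℂ] ℂ :=
    (ψ x₀ / ψ x₁) • ((BoundedContinuousFunction.evalCLM ℂ x₁).comp
      (SchwartzMap.toBoundedContinuousFunctionCLM ℂ ℝ ℂ)) -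
      (BoundedContinuousFunction.evalCLM ℂ x₀).comp
      (SchwartzMap.toBoundedContinuousFunctionCLM ℂ ℝ ℂ) with hL
  have hLapp : ∀ f : SchwartzMap ℝ ℂ, L f = (ψ x₀ / ψ x₁) * f x₁ - f x₀ := by
    intro f; simp [hL]
  -- L vanishes on the range of C
  have hker : ∀ f : SchwartzMap ℝ ℂ, L (C f) = 0 := by
    intro f
    rw [hLapp, hC, hC, hφeq, ← mul_assoc, div_mul_cancel₀ _ hψ1, sub_self]
  have key : ∀ f : SchwartzMap ℝ ℂ, (ψ x₀ / ψ x₁) * C f x₁ - C f x₀ = 0 := by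
    intro f; rw [← hLapp]; exact hker f
  -- a test function: a smooth bump at x₀ vanishing at x₁
  set d : ℝ := |x₁ - x₀| with hd
  have hdpos : 0 < d := abs_sub_pos.2 (Ne.symm hne)
  have hbump : ∃ g : SchwartzMap ℝ ℂ, g x₀ = 1 ∧ g x₁ = 0 := by
    set b : ContDiffBump x₀ := ⟨d / 2, (3 / 4) * d, by linarith, by linarith⟩ with hb
    have hcs : HasCompactSupport (fun x => (b x : ℂ)) := by
      apply HasCompactSupport.comp_left (g := fun r : ℝ => (r : ℂ)) b.hasCompactSupport
      simp
    refine ⟨schwartzOfCompactSupport _ (Complex.ofRealCLM.contDiff.comp b.contDiff) hcs,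
      ?_, ?_⟩
    · show ((b x₀ : ℝ) : ℂ) = 1
      rw [b.one_of_mem_closedBall]
      · simp
      · simp only [Metric.mem_closedBall, dist_self]; positivity
    · show ((b x₁ : ℝ) : ℂ) = 0
      have : x₁ ∉ Function.support b := by
        rw [b.support_eq]
        simp only [Metric.mem_ball, not_lt, hb]
        rw [Real.dist_eq]
        have : |x₁ - x₀| = d := hd.symm
        linarith [le_abs_self (x₁ - x₀), abs_nonneg (x₁ - x₀)]
      simpa [Function.mem_support, not_not] using this
  obtain ⟨g, hg0, hg1⟩ := hbump
  have hLg : L g ≠ 0 := by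
    rw [hLapp, hg0, hg1, mul_zero, zero_sub]
    simp
  refine ⟨key, ?_, ?_⟩
  · -- not dense range
    intro hdr
    have hsub : Set.range ⇑C ⊆ {x : SchwartzMap ℝ ℂ | L x = 0} := by
      rintro _ ⟨f, rfl⟩; exact hker f
    have hclosed : IsClosed {x : SchwartzMap ℝ ℂ | L x = 0} :=
      isClosed_eq L.continuous continuous_const
    have hmem : g ∈ {x : SchwartzMap ℝ ℂ | L x = 0} := by
      have := hclosed.closure_subset_iff.2 hsub
      exact this (hdr g)
    exact hLg hmem
  · -- not weakly supercyclic
    rintro ⟨f, hdense⟩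
    have hLw : Continuous fun x : WeakSpace ℂ (SchwartzMap ℝ ℂ) => L x :=
      WeakBilin.eval_continuous _ L
    have hclosed : IsClosed {x : WeakSpace ℂ (SchwartzMap ℝ ℂ) | L x = 0} :=
      isClosed_eq hLw continuous_const
    have hsub : {g : SchwartzMap ℝ ℂ | ∃ (c : ℂ) (n : ℕ), 1 ≤ n ∧ g = c • ((C ^ n) f)} ⊆
        {x : WeakSpace ℂ (SchwartzMap ℝ ℂ) | L x = 0} := by
      rintro _ ⟨c, n, hn, rfl⟩
      obtain ⟨m, rfl⟩ := Nat.exists_eq_add_of_le hn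
      have hpow : (C ^ (1 + m)) f = C ((C ^ m) f) := by
        rw [pow_add, pow_one]; rfl
      show L (c • (C ^ (1 + m)) f) = 0
      rw [map_smul, hpow, hker, smul_zero]
    have hmem : L g = 0 := by
      have := hclosed.closure_subset_iff.2 hsub
      exact this (hdense (g : WeakSpace ℂ (SchwartzMap ℝ ℂ)))
    exact hLg hmem
end
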